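/- arXiv:2003.02887 — 5 statements merged into one kernel-verified Lean document; each statement's English description precedes it below -/
import Mathlib

section
/- Every connected simple graph with at least three vertices admits a total weighting with vertex weights in {1,2} and edge weights in {1,2,3} such that for every edge uv, the sum of the weight of u and the weights of the edges incident to u differs from the sum of the weight of v and the weights of the edges incident to v. -/
/-!
Kalkowski's algorithm: add the vertices one at a time, keeping a weighting that is cool on the
processed set `A`, has vertex weights in `{1, 2}` on `A`, and gives weight `2` to every edge
leaving `A`. When `x` joins, its vertex weight `a ∈ {1, 2}` is free, and every processed
neighbour `u` may trade `(f u, w ux) = (1, 2) ↦ (2, 1)` or `(2, 2) ↦ (1, 3)`, which fixes the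
sum at `u` and shifts the sum at `x` by `∓1`. These choices reach `d + 2` consecutive values at
`x`, where `d` is the number of processed neighbours, and only `d` of them are forbidden.
-/

open Finset

theorem Finset.sum_update_add_eq {α M : Type*} [DecidableEq α] [AddCommMonoid M] {s : Finset α}
    {i : α} (hi : i ∈ s) (g : α → M) (b : M) :
    ∑ y ∈ s, Function.update g i b y + g i = ∑ y ∈ s, g y + b := by
  rw [sum_update_of_mem hi, ← add_sum_erase s g hi, sdiff_singleton_eq_erase]
  abel

theorem Finset.sum_ite_insert_add {α M : Type*} [DecidableEq α] [AddCommMonoid M] {s T : Finset α}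
    {y : α} (hys : y ∈ s) (hyT : y ∉ T) (k : α → M) (d : M) :
    ∑ u ∈ s, (if u ∈ insert y T then k u else d) + d =
      ∑ u ∈ s, (if u ∈ T then k u else d) + k y := by
  have := sum_update_add_eq hys (fun u => if u ∈ T then k u else d) (k y)
  simp only [if_neg hyT] at this
  rw [← this]
  congr 2 with u
  by_cases hu : u = y
  · subst hu; simp
  · simp [hu]

namespace Kalkowski

theorem exists_Icc_subset_attainable_sums {α : Type*} [DecidableEq α] (s F : Finset α)
    (hFs : F ⊆ s) (k : α → ℕ) (hk : ∀ u ∈ F, k u = 1 ∨ k u = 3) :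
    ∃ lo, ∀ c ∈ Icc lo (lo + #F + 1), ∃ a, (a = 1 ∨ a = 2) ∧ ∃ T ⊆ F,
      a + ∑ y ∈ s, (if y ∈ T then k y else 2) = c := by
  induction F using Finset.induction_on with
  | empty =>
    refine ⟨1 + 2 * #s, fun c hc => ⟨c - 2 * #s, ?_, ∅, empty_subset _, ?_⟩⟩ <;>
      simp only [mem_Icc, card_empty] at hc
    · omega
    · simp only [notMem_empty, if_false, sum_const, smul_eq_mul]
      omega
  | insert y F hyF ih =>
    have hys : y ∈ s := hFs (mem_insert_self y F)
    obtain ⟨lo, hlo⟩ := ih ((subset_insert y F).trans hFs) fun u hu => hk u (mem_insert_of_mem hu)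
    have untoggled : ∀ c ∈ Icc lo (lo + #F + 1), ∃ a, (a = 1 ∨ a = 2) ∧ ∃ T ⊆ insert y F,
        a + ∑ u ∈ s, (if u ∈ T then k u else 2) = c := fun c hc => by
      obtain ⟨a, ha, T, hT, hsum⟩ := hlo c hc
      exact ⟨a, ha, T, hT.trans (subset_insert y F), hsum⟩
    have toggled : ∀ c ∈ Icc lo (lo + #F + 1), ∃ a, (a = 1 ∨ a = 2) ∧ ∃ T ⊆ insert y F,
        a + ∑ u ∈ s, (if u ∈ T then k u else 2) + 2 = c + k y := fun c hc => by
      obtain ⟨a, ha, T, hT, hsum⟩ := hlo c hc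
      refine ⟨a, ha, insert y T, insert_subset_insert y hT, ?_⟩
      rw [add_assoc, sum_ite_insert_add hys fun hyT => hyF (hT hyT), ← hsum, add_assoc]
    have hlo_mem : lo ∈ Icc lo (lo + #F + 1) := by
      simp only [mem_Icc]; omega
    have hhi_mem : lo + #F + 1 ∈ Icc lo (lo + #F + 1) := by
      simp only [mem_Icc]; omega
    rw [card_insert_of_notMem hyF]
    rcases hk y (mem_insert_self y F) with hky | hky
    · -- so that `lo - 1` below does not truncate
      have hlo_pos : 1 ≤ lo := by
        obtain ⟨a, ha, _, _, hsum⟩ := hlo lo hlo_mem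
        omega
      refine ⟨lo - 1, fun c hc => ?_⟩
      simp only [mem_Icc] at hc
      by_cases hc0 : c < lo
      · obtain ⟨a, ha, T, hT, hsum⟩ := toggled lo hlo_mem
        exact ⟨a, ha, T, hT, by omega⟩
      · exact untoggled c (by simp only [mem_Icc]; omega)
    · refine ⟨lo, fun c hc => ?_⟩
      simp only [mem_Icc] at hc
      by_cases hc0 : c ≤ lo + #F + 1
      · exact untoggled c (by simp only [mem_Icc]; omega)
      · obtain ⟨a, ha, T, hT, hsum⟩ := toggled (lo + #F + 1) hhi_mem
        exact ⟨a, ha, T, hT, by omega⟩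

variable {V : Type*} [DecidableEq V]

def reweightVertex (f : V → ℕ) (x : V) (a : ℕ) (T : Finset V) (v : V) : ℕ :=
  if v = x then a else if v ∈ T then 3 - f v else f v

def reweightEdge (f : V → ℕ) (w : Sym2 V → ℕ) (x : V) (T : Finset V) : Sym2 V → ℕ :=
  Sym2.lift ⟨fun u v => if u = x ∧ v ∈ T then 2 * f v - 1
    else if v = x ∧ u ∈ T then 2 * f u - 1 else w s(u, v), fun u v => by
      by_cases hu : u = x <;> by_cases hv : v = x <;> simp [hu, hv, Sym2.eq_swap]⟩

section reweight

variable {f : V → ℕ} {w : Sym2 V → ℕ} {x v : V} {T : Finset V}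

theorem reweightEdge_mk_of_notMem (hvx : v ≠ x) (hvT : v ∉ T) (y : V) :
    reweightEdge f w x T s(v, y) = w s(v, y) := by
  simp [reweightEdge, hvx, hvT]

theorem reweightEdge_mk_of_mem (hvx : v ≠ x) (hvT : v ∈ T) :
    (fun y => reweightEdge f w x T s(v, y)) =
      Function.update (fun y => w s(v, y)) x (2 * f v - 1) := by
  ext y
  by_cases hy : y = x
  · subst hy; simp [reweightEdge, hvx, hvT]
  · simp [reweightEdge, hvx, hy]

theorem reweightEdge_mk_self (hxT : x ∉ T) (y : V) :
    reweightEdge f w x T s(x, y) = if y ∈ T then 2 * f y - 1 else w s(x, y) := by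
  by_cases hy : y = x
  · subst hy; simp [reweightEdge, hxT]
  · simp [reweightEdge, hy]

end reweight

variable [Fintype V] (G : SimpleGraph V) [DecidableRel G.Adj]

def totalWeight (f : V → ℕ) (w : Sym2 V → ℕ) (v : V) : ℕ :=
  f v + ∑ u ∈ G.neighborFinset v, w s(v, u)

structure IsCoolOn (A : Finset V) (f : V → ℕ) (w : Sym2 V → ℕ) : Prop where
  vertex_weight : ∀ v ∈ A, f v = 1 ∨ f v = 2
  edge_weight : ∀ e, w e = 1 ∨ w e = 2 ∨ w e = 3
  edge_weight_eq_two : ∀ u v, u ∉ A → w s(u, v) = 2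
  totalWeight_ne : ∀ u ∈ A, ∀ v ∈ A, G.Adj u v → totalWeight G f w u ≠ totalWeight G f w v

namespace IsCoolOn

variable {G} {A T : Finset V} {f : V → ℕ} {w : Sym2 V → ℕ} {x : V}

theorem totalWeight_reweight_of_mem (h : IsCoolOn G A f w) (hx : x ∉ A)
    (hTx : T ⊆ G.neighborFinset x) (a : ℕ) {v : V} (hv : v ∈ A) :
    totalWeight G (reweightVertex f x a T) (reweightEdge f w x T) v = totalWeight G f w v := by
  have hvx : v ≠ x := ne_of_mem_of_not_mem hv hx
  by_cases hvT : v ∈ T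
  · have hxv : x ∈ G.neighborFinset v := by
      simpa [SimpleGraph.mem_neighborFinset, SimpleGraph.adj_comm] using hTx hvT
    have hvx2 : w s(v, x) = 2 := by rw [Sym2.eq_swap]; exact h.edge_weight_eq_two x v hx
    have := sum_update_add_eq hxv (fun y => w s(v, y)) (2 * f v - 1)
    rw [← reweightEdge_mk_of_mem hvx hvT, hvx2] at this
    dsimp only at this
    have hfv := h.vertex_weight v hv
    simp only [totalWeight, reweightVertex, if_neg hvx, if_pos hvT]
    omega
  · simp only [totalWeight, reweightVertex, if_neg hvx, if_neg hvT,
      reweightEdge_mk_of_notMem hvx hvT]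

theorem totalWeight_reweight_self (h : IsCoolOn G A f w) (hx : x ∉ A) (hTA : T ⊆ A) (a : ℕ) :
    totalWeight G (reweightVertex f x a T) (reweightEdge f w x T) x =
      a + ∑ y ∈ G.neighborFinset x, if y ∈ T then 2 * f y - 1 else 2 := by
  have hxT : x ∉ T := fun hxT => hx (hTA hxT)
  simp only [totalWeight, reweightVertex, ↓reduceIte, reweightEdge_mk_self hxT,
    h.edge_weight_eq_two x _ hx]

theorem reweight_insert (h : IsCoolOn G A f w) (hx : x ∉ A) (hTA : T ⊆ A)
    (hTx : T ⊆ G.neighborFinset x) {a : ℕ} (ha : a = 1 ∨ a = 2)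
    (hfresh : totalWeight G (reweightVertex f x a T) (reweightEdge f w x T) x ∉
      (G.neighborFinset x ∩ A).image (totalWeight G f w)) :
    IsCoolOn G (insert x A) (reweightVertex f x a T) (reweightEdge f w x T) where
  vertex_weight v hv := by
    rcases mem_insert.1 hv with rfl | hvA
    · simpa [reweightVertex] using ha
    · have hvx : v ≠ x := ne_of_mem_of_not_mem hvA hx
      have hfv := h.vertex_weight v hvA
      by_cases hvT : v ∈ T <;> simp only [reweightVertex, hvx, hvT, if_false, if_true] <;> omega
  edge_weight e := by
    induction e using Sym2.ind with
    | _ u v =>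
      simp only [reweightEdge, Sym2.lift_mk]
      split_ifs with huv hvu
      · have := h.vertex_weight v (hTA huv.2); omega
      · have := h.vertex_weight u (hTA hvu.2); omega
      · exact h.edge_weight _
  edge_weight_eq_two u v hu := by
    have hux : u ≠ x := fun hux => hu (hux ▸ mem_insert_self x A)
    have huA : u ∉ A := fun huA => hu (mem_insert_of_mem huA)
    rw [reweightEdge_mk_of_notMem hux fun huT => huA (hTA huT)]
    exact h.edge_weight_eq_two u v huA
  totalWeight_ne u hu v hv huv := by
    have hback : ∀ y ∈ A, G.Adj x y →
        totalWeight G (reweightVertex f x a T) (reweightEdge f w x T) x ≠ totalWeight G f w y :=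
      fun y hy hxy heq => hfresh <| mem_image.2 ⟨y, mem_inter.2 ⟨by simpa using hxy, hy⟩, heq.symm⟩
    rcases mem_insert.1 hu with rfl | huA <;> rcases mem_insert.1 hv with rfl | hvA
    · exact (G.irrefl huv).elim
    · rw [totalWeight_reweight_of_mem h hx hTx a hvA]
      exact hback v hvA huv
    · rw [totalWeight_reweight_of_mem h hx hTx a huA]
      exact (hback u huA huv.symm).symm
    · rw [totalWeight_reweight_of_mem h hx hTx a huA, totalWeight_reweight_of_mem h hx hTx a hvA]
      exact h.totalWeight_ne u huA v hvA huv

theorem exists_insert (h : IsCoolOn G A f w) (hx : x ∉ A) :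
    ∃ f' w', IsCoolOn G (insert x A) f' w' := by
  set F := G.neighborFinset x ∩ A
  obtain ⟨lo, hlo⟩ := exists_Icc_subset_attainable_sums (G.neighborFinset x) F inter_subset_left
    (fun u => 2 * f u - 1) fun u hu => by have := h.vertex_weight u (mem_inter.1 hu).2; omega
  obtain ⟨c, hc, hcB⟩ := exists_mem_notMem_of_card_lt_card
    (s := F.image (totalWeight G f w)) (t := Icc lo (lo + #F + 1)) <| by
      simp only [Nat.card_Icc]
      have := card_image_le (s := F) (f := totalWeight G f w)
      omega
  obtain ⟨a, ha, T, hTF, rfl⟩ := hlo c hc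
  have hTA : T ⊆ A := hTF.trans inter_subset_right
  refine ⟨_, _, h.reweight_insert hx hTA (hTF.trans inter_subset_left) ha ?_⟩
  rwa [h.totalWeight_reweight_self hx hTA]

end IsCoolOn

theorem exists_isCoolOn (A : Finset V) : ∃ f w, IsCoolOn G A f w := by
  induction A using Finset.induction_on with
  | empty => exact ⟨fun _ => 1, fun _ => 2, by simp, by simp, by simp, by simp⟩
  | insert x A hx ih =>
    obtain ⟨f, w, h⟩ := ih
    exact h.exists_insert hx

end Kalkowski

theorem kalkowski_total_weighting_general {V : Type*} [Fintype V]
    (G : SimpleGraph V) [DecidableRel G.Adj] :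
    ∃ (fV : V → ℕ) (fE : Sym2 V → ℕ),
      (∀ v : V, fV v ∈ ({1, 2} : Set ℕ)) ∧
      (∀ e ∈ G.edgeSet, fE e ∈ ({1, 2, 3} : Set ℕ)) ∧
      ∀ u v : V, G.Adj u v →
        (fV u + ∑ w ∈ G.neighborFinset u, fE s(u, w)) ≠
        (fV v + ∑ w ∈ G.neighborFinset v, fE s(v, w)) := by
  classical
  obtain ⟨f, w, h⟩ := Kalkowski.exists_isCoolOn G univ
  exact ⟨f, w, fun v => h.vertex_weight v (mem_univ v), fun e _ => h.edge_weight e,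
    fun u v huv => h.totalWeight_ne u (mem_univ u) v (mem_univ v) huv⟩

/-- **Kalkowski's theorem**: every connected simple graph with at least three vertices
admits a total weighting with vertex weights in `{1,2}` and edge weights in `{1,2,3}`
such that adjacent vertices get distinct total sums. -/
theorem kalkowski_total_weighting {V : Type*} [Fintype V] [DecidableEq V]
    (G : SimpleGraph V) [DecidableRel G.Adj]
    (hconn : G.Connected) (hcard : 3 ≤ Fintype.card V) :
    ∃ (fV : V → ℕ) (fE : Sym2 V → ℕ),
      (∀ v : V, fV v ∈ ({1, 2} : Set ℕ)) ∧
      (∀ e ∈ G.edgeSet, fE e ∈ ({1, 2, 3} : Set ℕ)) ∧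
      ∀ u v : V, G.Adj u v →
        (fV u + ∑ w ∈ G.neighborFinset u, fE s(u, w)) ≠
        (fV v + ∑ w ∈ G.neighborFinset v, fE s(v, w)) :=
  kalkowski_total_weighting_general G
end

section
/- Let p be a prime. Define a coloring c : ℕ⁺ → (ℤ/pℤ)ˣ by writing n = p^s · m with p ∤ m and setting c(n) = m mod p. Then for any n ≥ 1 and any distinct a, b ∈ {1, 2, …, p−1}, we have c(a·n) ≠ c(b·n). In particular, every cascade {n, 2n, …, (p−1)n} is rainbow under this (p−1)-coloring. -/
open Finset

/-- The color of `n`: write `n = p^s * m` with `p ∤ m`; the color is `m mod p`. -/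
def cascadeColor (p n : ℕ) : ZMod p := ((n / p ^ (n.factorization p) : ℕ) : ZMod p)

lemma cascadeColor_mul (p : ℕ) (hp : p.Prime) (a n : ℕ) (ha0 : a ≠ 0) (hn : n ≠ 0)
    (hpa : ¬ p ∣ a) :
    cascadeColor p (a * n) = (a : ZMod p) * cascadeColor p n := by
  unfold cascadeColor
  rw [Nat.factorization_mul ha0 hn, Finsupp.add_apply,
    Nat.factorization_eq_zero_of_not_dvd hpa, Nat.zero_add,
    Nat.mul_div_assoc a (Nat.ordProj_dvd n p), Nat.cast_mul]

/-- For a prime `p`, the coloring `n ↦ (p-free part of n) mod p` makes every cascade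
`{n, 2n, …, (p-1)n}` rainbow: distinct multiples `a·n`, `b·n` with
`a, b ∈ {1, …, p-1}` receive distinct colors. -/
theorem cascade_rainbow_coloring (p : ℕ) (hp : p.Prime) :
    ∀ n : ℕ, 1 ≤ n → ∀ a b : ℕ, 1 ≤ a → a ≤ p - 1 → 1 ≤ b → b ≤ p - 1 → a ≠ b →
      cascadeColor p (a * n) ≠ cascadeColor p (b * n) := by
  intro n hn a b ha1 ha2 hb1 hb2 hab
  have hplt : 1 < p := hp.one_lt
  have halt : a < p := lt_of_le_of_lt ha2 (Nat.sub_lt hp.pos one_pos)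
  have hblt : b < p := lt_of_le_of_lt hb2 (Nat.sub_lt hp.pos one_pos)
  have hpa : ¬ p ∣ a := Nat.not_dvd_of_pos_of_lt ha1 halt
  have hpb : ¬ p ∣ b := Nat.not_dvd_of_pos_of_lt hb1 hblt
  have hn0 : n ≠ 0 := by omega
  rw [cascadeColor_mul p hp a n (by omega) hn0 hpa,
      cascadeColor_mul p hp b n (by omega) hn0 hpb]
  have hm : cascadeColor p n ≠ 0 := by
    unfold cascadeColor
    rw [Ne, ZMod.natCast_eq_zero_iff]
    exact Nat.not_dvd_ordCompl hp hn0
  haveI : Fact p.Prime := ⟨hp⟩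
  intro h
  have : (a : ZMod p) = b := mul_right_cancel₀ hm h
  have := congrArg ZMod.val this
  rw [ZMod.val_cast_of_lt halt, ZMod.val_cast_of_lt hblt] at this
  exact hab this
end

section
/- Let p be a prime and let c be the coloring of ℕ⁺ defined by c(n) = m mod p where n = p^s·m with p ∤ m. If a partition of the color set (ℤ/pℤ)ˣ into two classes of sizes ⌊(p−1)/2⌋ and ⌈(p−1)/2⌉ is fixed, then the induced 2-coloring f : ℕ⁺ → {−1,+1} satisfies |∑_{i=1}^{p−1} f(i·n)| ≤ 1 for every n ≥ 1, i.e., every cascade of length p−1 is balanced. -/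
/-!
The coloring is completely multiplicative, and for `p ∤ i` the color of `i` is `i` itself.
Hence the colors along the cascade `n, 2n, …, (p-1)n` are `i · c(n)` with `c(n) ≠ 0`, i.e. they
run through every nonzero residue exactly once, and the sum equals
`|S| - (p - 1 - |S|) = 2⌊(p-1)/2⌋ - (p-1) ∈ {-1, 0}`.
-/

open Finset

theorem cascadeColor_mul_s2 (p a b : ℕ) :
    cascadeColor p (a * b) = cascadeColor p a * cascadeColor p b := by
  simp only [cascadeColor, Nat.ordCompl_mul, Nat.cast_mul]

theorem cascadeColor_of_not_dvd {p n : ℕ} (h : ¬p ∣ n) : cascadeColor p n = n := by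
  simp only [cascadeColor, Nat.factorization_eq_zero_of_not_dvd h, pow_zero, Nat.div_one]

theorem cascadeColor_ne_zero {p n : ℕ} (hp : p.Prime) (hn : n ≠ 0) : cascadeColor p n ≠ 0 :=
  (ZMod.natCast_eq_zero_iff _ p).not.mpr (Nat.not_dvd_ordCompl hp hn)

theorem ZMod.sum_Icc_natCast_eq_sum_erase_zero {M : Type*} [AddCommMonoid M] {p : ℕ}
    [NeZero p] (g : ZMod p → M) :
    ∑ i ∈ Icc 1 (p - 1), g i = ∑ x ∈ univ.erase 0, g x := by
  refine sum_nbij' (fun i => (i : ZMod p)) ZMod.val ?_ ?_ ?_ ?_ fun _ _ => rfl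
  · intro i hi
    rw [mem_Icc] at hi
    rw [mem_erase, Ne, ZMod.natCast_eq_zero_iff]
    exact ⟨Nat.not_dvd_of_pos_of_lt (by omega) (by omega), mem_univ _⟩
  · intro x hx
    have := ZMod.val_lt x
    have := (ZMod.val_ne_zero x).mpr (ne_of_mem_erase hx)
    rw [mem_Icc]
    omega
  · intro i hi
    rw [mem_Icc] at hi
    exact ZMod.val_cast_of_lt (by omega)
  · intro x _
    exact ZMod.natCast_zmod_val x

theorem Finset.sum_erase_zero_comp_mul_right {G M : Type*} [GroupWithZero G] [Fintype G]
    [DecidableEq G] [AddCommMonoid M] {c : G} (hc : c ≠ 0) (g : G → M) :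
    ∑ x ∈ univ.erase 0, g (x * c) = ∑ x ∈ univ.erase 0, g x := by
  refine sum_nbij' (· * c) (· * c⁻¹) ?_ ?_ ?_ ?_ fun _ _ => rfl <;> intro x hx <;> simp_all

theorem Finset.sum_ite_mem_one_neg_one {α : Type*} [DecidableEq α] {S T : Finset α}
    (h : S ⊆ T) : ∑ x ∈ T, (if x ∈ S then (1 : ℤ) else -1) = 2 * #S - #T := by
  rw [sum_ite, sum_const, sum_const, filter_mem_eq_inter, inter_eq_right.mpr h,
    filter_not, filter_mem_eq_inter, inter_eq_right.mpr h, card_sdiff_of_subset h,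
    nsmul_eq_mul, nsmul_eq_mul, Nat.cast_sub (card_le_card h)]
  ring

/-- Splitting the `p-1` colors of the rainbow coloring into two classes of sizes
`⌊(p-1)/2⌋` and `⌈(p-1)/2⌉` yields a `2`-coloring `f : ℕ⁺ → {-1,+1}` under which
every cascade of length `p-1` is balanced: `|∑_{i=1}^{p-1} f(i·n)| ≤ 1`. -/
theorem cascade_balanced_from_rainbow (p : ℕ) (hp : p.Prime)
    (S : Finset (ZMod p)) (hS0 : ∀ x ∈ S, x ≠ 0) (hScard : S.card = (p - 1) / 2)
    (f : ℕ → ℤ) (hf : ∀ n : ℕ, f n = if cascadeColor p n ∈ S then 1 else -1) :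
    ∀ n : ℕ, 1 ≤ n → |∑ i ∈ Finset.Icc 1 (p - 1), f (i * n)| ≤ 1 := by
  have : Fact p.Prime := ⟨hp⟩
  intro n hn
  set χ : ZMod p → ℤ := fun x => if x ∈ S then 1 else -1
  have hcolor : ∀ i ∈ Icc 1 (p - 1), f (i * n) = χ (i * cascadeColor p n) := by
    intro i hi
    have hpi : ¬p ∣ i := Nat.not_dvd_of_pos_of_lt (mem_Icc.mp hi).1 (by grind)
    rw [hf, cascadeColor_mul_s2, cascadeColor_of_not_dvd hpi]
  have hS : S ⊆ univ.erase 0 := fun x hx => mem_erase.mpr ⟨hS0 x hx, mem_univ x⟩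
  rw [sum_congr rfl hcolor, ZMod.sum_Icc_natCast_eq_sum_erase_zero (χ <| · * _),
    sum_erase_zero_comp_mul_right (cascadeColor_ne_zero hp (by omega)),
    sum_ite_mem_one_neg_one hS, card_erase_of_mem (mem_univ 0), card_univ, ZMod.card, hScard]
  exact abs_le.mpr ⟨by omega, by omega⟩
end

section
/- Let g : ℕ⁺ → {−1,+1} be the completely multiplicative function determined by g(3) = +1 and g(p) = +1 if p ≡ 1 (mod 3), g(p) = −1 if p ≡ 2 (mod 3) for primes p ≠ 3 (equivalently, g(n) = +1 iff the 3-free part of n is ≡ 1 mod 3). Then for every k ≥ 1, ∑_{i=1}^{k} g(i) equals the number of digits equal to 1 in the ternary (base-3) expansion of k. -/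
open Finset

/-- The completely multiplicative function `g : ℕ⁺ → {-1,+1}` with `g(n) = +1` iff the
`3`-free part of `n` is `≡ 1 (mod 3)`. -/
def gThree (n : ℕ) : ℤ := if (n / 3 ^ (n.factorization 3)) % 3 = 1 then 1 else -1

lemma gThree_add_one (m : ℕ) : gThree (3*m+1) = 1 := by
  unfold gThree
  have h : (3*m+1).factorization 3 = 0 :=
    Nat.factorization_eq_zero_of_not_dvd (by omega)
  rw [h, pow_zero, Nat.div_one]
  have : (3*m+1) % 3 = 1 := by omega
  simp [this]

lemma gThree_add_two (m : ℕ) : gThree (3*m+2) = -1 := by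
  unfold gThree
  have h : (3*m+2).factorization 3 = 0 :=
    Nat.factorization_eq_zero_of_not_dvd (by omega)
  rw [h, pow_zero, Nat.div_one]
  have : (3*m+2) % 3 = 2 := by omega
  simp [this]

lemma gThree_three_mul (m : ℕ) (hm : m ≠ 0) : gThree (3*m) = gThree m := by
  unfold gThree
  have h3 : (3:ℕ).Prime := Nat.prime_three
  have hf : (3*m).factorization 3 = m.factorization 3 + 1 := by
    rw [Nat.factorization_mul (by norm_num) hm, Finsupp.add_apply,
      h3.factorization, Finsupp.single_apply]
    simp [add_comm]
  have hd : 3*m / 3 ^ ((3*m).factorization 3) = m / 3 ^ (m.factorization 3) := by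
    rw [hf, pow_succ, mul_comm (3 ^ m.factorization 3) 3,
      ← Nat.div_div_eq_div_mul, Nat.mul_div_cancel_left _ (by norm_num : 0 < 3)]
  rw [hd]

lemma gThree_sum_three_mul (m : ℕ) :
    ∑ i ∈ Finset.Icc 1 (3*m), gThree i = ∑ i ∈ Finset.Icc 1 m, gThree i := by
  induction m with
  | zero => simp
  | succ n ih =>
    rw [show 3*(n+1) = (3*n+2)+1 by ring, Finset.sum_Icc_succ_top (by omega),
      show (3*n+2) = (3*n+1)+1 from rfl, Finset.sum_Icc_succ_top (by omega),
      show (3*n+1) = (3*n)+1 from rfl, Finset.sum_Icc_succ_top (by omega),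
      Finset.sum_Icc_succ_top (by omega : 1 ≤ n+1), ih,
      gThree_add_one, gThree_add_two,
      show (3*n+1)+1+1 = 3*(n+1) by ring, gThree_three_mul (n+1) (by omega)]
    ring

lemma gThree_sum_aux (k : ℕ) :
    ∑ i ∈ Finset.Icc 1 k, gThree i = ((Nat.digits 3 k).count 1 : ℤ) := by
  induction k using Nat.strong_induction_on with
  | _ k ih =>
    rcases Nat.eq_zero_or_pos k with rfl | hk
    · simp
    have hdig : Nat.digits 3 k = k % 3 :: Nat.digits 3 (k / 3) :=
      Nat.digits_def' (by norm_num) hk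
    have hlt : k / 3 < k := Nat.div_lt_self hk (by norm_num)
    have ihd := ih (k / 3) hlt
    have hr : k % 3 = 0 ∨ k % 3 = 1 ∨ k % 3 = 2 := by omega
    rcases hr with h | h | h
    · have hk3 : k = 3 * (k / 3) := by omega
      rw [hk3, gThree_sum_three_mul, ihd, ← hk3, hdig, h]
      simp
    · have hk3 : k = 3 * (k / 3) + 1 := by omega
      rw [hk3, Finset.sum_Icc_succ_top (by omega), gThree_sum_three_mul,
        gThree_add_one, ihd, ← hk3, hdig, h]
      simp
    · have hk3 : k = 3 * (k / 3) + 2 := by omega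
      rw [hk3, show 3*(k/3)+2 = (3*(k/3)+1)+1 from rfl,
        Finset.sum_Icc_succ_top (by omega), Finset.sum_Icc_succ_top (by omega),
        gThree_sum_three_mul, gThree_add_one, gThree_add_two, ihd, ← hk3, hdig, h]
      simp

/-- `∑_{i=1}^{k} g(i)` equals the number of digits equal to `1` in the ternary
expansion of `k`. -/
theorem gThree_partial_sum_eq_count_ones (k : ℕ) (hk : 1 ≤ k) :
    ∑ i ∈ Finset.Icc 1 k, gThree i = ((Nat.digits 3 k).count 1 : ℤ) := by
  exact gThree_sum_aux k
end

section
/- For every prime p, the arithmetic graph B_{p−1} (on ℕ⁺, with a ~ b iff max(a,b)/gcd(a,b) ≤ p−1) has a proper vertex coloring with p−1 colors; hence χ(B_{p−1}) = p−1. -/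
open Finset

/-- The arithmetic graph `B_k` on the positive integers: `a ∼ b` iff `a ≠ b` and both
`a/gcd(a,b) ≤ k` and `b/gcd(a,b) ≤ k`. -/
def arithGraph (k : ℕ) : SimpleGraph ℕ+ where
  Adj a b := a ≠ b ∧ (a : ℕ) / Nat.gcd a b ≤ k ∧ (b : ℕ) / Nat.gcd a b ≤ k
  symm := by
    constructor
    rintro a b ⟨h1, h2, h3⟩
    exact ⟨h1.symm, by rwa [Nat.gcd_comm], by rwa [Nat.gcd_comm]⟩
  loopless := by constructor; rintro a ⟨h, -⟩; exact h rfl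

/-! Colour `n` by the residue mod `p` of its `p`-free part `ordCompl[p] n`, a unit of `ZMod p`.
Adjacent vertices are `g a'` and `g b'` with distinct `a', b' ∈ [1, p - 1]`; these are prime
to `p`, so the `p`-free parts are `ordCompl[p] g * a'` and `ordCompl[p] g * b'`, and cancelling
the unit `ordCompl[p] g` shows that the colours differ. The clique `{1, …, p - 1}` gives the
matching lower bound. -/

open SimpleGraph

theorem Nat.ordCompl_mul_of_not_dvd {p m : ℕ} (g : ℕ) (hm : ¬p ∣ m) :
    ordCompl[p] (g * m) = ordCompl[p] g * m := by
  simp [Nat.ordCompl_mul, Nat.factorization_eq_zero_of_not_dvd hm]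

theorem Nat.cast_ordCompl_mul_ne {p g a b : ℕ} [hp : Fact p.Prime] (hg : g ≠ 0)
    (ha₀ : 0 < a) (ha : a < p) (hb₀ : 0 < b) (hb : b < p) (hab : a ≠ b) :
    ((ordCompl[p] (g * a) : ℕ) : ZMod p) ≠ (ordCompl[p] (g * b) : ℕ) := by
  have hga : ((ordCompl[p] g : ℕ) : ZMod p) ≠ 0 :=
    (ZMod.natCast_eq_zero_iff _ _).not.mpr (Nat.not_dvd_ordCompl hp.out hg)
  rw [Nat.ordCompl_mul_of_not_dvd g (Nat.not_dvd_of_pos_of_lt ha₀ ha),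
    Nat.ordCompl_mul_of_not_dvd g (Nat.not_dvd_of_pos_of_lt hb₀ hb), Nat.cast_mul, Nat.cast_mul]
  intro h
  have hab' := mul_left_cancel₀ hga h
  rw [ZMod.natCast_eq_natCast_iff', Nat.mod_eq_of_lt ha, Nat.mod_eq_of_lt hb] at hab'
  exact hab hab'

theorem arithGraph_adj_ordCompl_ne {p : ℕ} [hp : Fact p.Prime] {a b : ℕ+}
    (h : (arithGraph (p - 1)).Adj a b) :
    ((ordCompl[p] (a : ℕ) : ℕ) : ZMod p) ≠ (ordCompl[p] (b : ℕ) : ℕ) := by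
  obtain ⟨hab, ha, hb⟩ := h
  set g := Nat.gcd a b
  have hg : 0 < g := Nat.gcd_pos_of_pos_left _ a.pos
  have hga : g * ((a : ℕ) / g) = a := Nat.mul_div_cancel' (Nat.gcd_dvd_left _ _)
  have hgb : g * ((b : ℕ) / g) = b := Nat.mul_div_cancel' (Nat.gcd_dvd_right _ _)
  have hp2 := hp.out.two_le
  rw [← hga, ← hgb]
  refine Nat.cast_ordCompl_mul_ne hg.ne'
    (Nat.div_pos (Nat.le_of_dvd a.pos (Nat.gcd_dvd_left _ _)) hg) (by omega)
    (Nat.div_pos (Nat.le_of_dvd b.pos (Nat.gcd_dvd_right _ _)) hg) (by omega)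
    fun h => hab (PNat.coe_injective ?_)
  rw [← hga, ← hgb, h]

def arithGraphColoring (p : ℕ) [hp : Fact p.Prime] : (arithGraph (p - 1)).Coloring (ZMod p)ˣ :=
  Coloring.mk
    (fun n => ZMod.unitOfCoprime (ordCompl[p] n) (Nat.coprime_ordCompl hp.out n.ne_zero).symm)
    fun h hc => arithGraph_adj_ordCompl_ne h (by simpa using congrArg Units.val hc)

theorem arithGraph_colorable_prime (p : ℕ) (hp : p.Prime) :
    (arithGraph (p - 1)).Colorable (p - 1) := by
  have := Fact.mk hp
  have hcol := (arithGraphColoring p).colorable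
  rwa [ZMod.card_units] at hcol

theorem arithGraph_isClique_le (k : ℕ) : (arithGraph k).IsClique {n : ℕ+ | (n : ℕ) ≤ k} :=
  fun _ ha _ hb hab =>
    ⟨hab, (Nat.div_le_self _ _).trans ha, (Nat.div_le_self _ _).trans hb⟩

theorem le_chromaticNumber_arithGraph (k : ℕ) :
    (k : ℕ∞) ≤ (arithGraph k).chromaticNumber := by
  have hclique : (arithGraph k).IsClique
      ((range k).map ⟨Nat.succPNat, Nat.succPNat_injective⟩ : Finset ℕ+) :=
    (arithGraph_isClique_le k).subset (by
      intro _ hx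
      obtain ⟨i, hi, rfl⟩ := mem_map.mp hx
      exact mem_range.mp hi)
  simpa using hclique.card_le_chromaticNumber

/-- For every prime `p`, the arithmetic graph `B_{p-1}` has a proper coloring with
`p - 1` colors, and its chromatic number is exactly `p - 1`. -/
theorem arithGraph_chromatic_prime (p : ℕ) (hp : p.Prime) :
    (∃ c : ℕ+ → Fin (p - 1), ∀ a b : ℕ+, (arithGraph (p - 1)).Adj a b → c a ≠ c b) ∧
    (arithGraph (p - 1)).chromaticNumber = (p - 1 : ℕ) := by
  have hcol := arithGraph_colorable_prime p hp
  have ⟨C⟩ := hcol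
  exact ⟨⟨C, fun _ _ h => C.valid h⟩,
    le_antisymm hcol.chromaticNumber_le (le_chromaticNumber_arithGraph _)⟩
end
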